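/- Let Σ = {a,b} and E = (a*)*. Then the prioritized Thompson pNFA Thp(E) has exponential backtracking, witnessed by the family W = {aⁿb : n ∈ ℕ}: the function n ↦ |btr_{Thp(E)}(aⁿb)| is in 2^{Ω(n)}, i.e., there exist c > 1 and N such that |btr_{Thp(E)}(aⁿb)| ≥ cⁿ for all n ≥ N. -/

import Mathlib

/-! ## Finite ordered trees -/

inductive OTree (α : Type) : Type where
  | node : α → List (OTree α) → OTree α

namespace OTree

/-- Number of nodes of a tree. -/
def size {α : Type} : OTree α → ℕ
  | node _ ts => 1 + (ts.attach.map (fun x => size x.1)).sum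
decreasing_by
  have := List.sizeOf_lt_of_mem x.2
  simp only [OTree.node.sizeOf_spec]
  omega

/-- Does some label in the tree satisfy `p`? -/
def anyLabel {α : Type} (p : α → Bool) : OTree α → Bool
  | node l ts => p l || ts.attach.any (fun x => anyLabel p x.1)
decreasing_by
  have := List.sizeOf_lt_of_mem x.2
  simp only [OTree.node.sizeOf_spec]
  omega

/-- Rank: maximum number of children of a node. -/
def rank {α : Type} : OTree α → ℕ
  | node _ ts => max ts.length ((ts.attach.map (fun x => rank x.1)).foldr max 0)
decreasing_by
  have := List.sizeOf_lt_of_mem x.2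
  simp only [OTree.node.sizeOf_spec]
  omega

/-- Root label. -/
def root {α : Type} : OTree α → α
  | node l _ => l

end OTree

/-! ## Prioritized NFA -/

/-- A prioritized NFA over alphabet `A` with state set `Q`.  `isQ2 q = true` means `q ∈ Q₂`
(the ε-states); `isQ2 q = false` means `q ∈ Q₁`.  `d1` is the (partial) deterministic
transition function on `Q₁`, `d2` the prioritized ε-transition function on `Q₂`
(the list order gives the priorities), `final` the set of final states. -/
structure PNFA (A Q : Type) where
  isQ2 : Q → Bool
  init : Q
  d1 : Q → A → Option Q
  d2 : Q → List Q
  final : Q → Bool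

/-- Labels of nodes of backtracking runs: states, `acc` and `rej`. -/
inductive BLab (Q : Type) : Type where
  | st : Q → BLab Q
  | acc : BLab Q
  | rej : BLab Q

/-- A backtracking run succeeds iff `acc` occurs in it. -/
def OTree.succeeds {Q : Type} (t : OTree (BLab Q)) : Bool :=
  t.anyLabel (fun l => match l with | BLab.acc => true | _ => false)

/-- Keep the children trees up to and including the first succeeding one
(all of them if none succeeds). -/
def firstSucc {Q : Type} : List (OTree (BLab Q)) → List (OTree (BLab Q))
  | [] => []
  | t :: ts => if t.succeeds then [t] else t :: firstSucc ts

/-- Termination measure for ε-recursions. -/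
def cMeasure {A Q : Type} [Fintype Q] (M : PNFA A Q) (C : Q → ℕ) : ℕ :=
  ∑ q : Q, ((M.d2 q).length - min (C q) (M.d2 q).length)

/-- The `(q,w,C)`-backtracking run of the pNFA `M`. -/
def btr {A Q : Type} [DecidableEq Q] [Fintype Q] (M : PNFA A Q) (q : Q) (w : List A)
    (C : Q → ℕ) : OTree (BLab Q) :=
  if M.final q = true ∧ w.isEmpty = true then .node (.st q) [.node .acc []]
  else if M.isQ2 q = true then
    if hik : (M.d2 q).length < C q + 1 then .node (.st q) [.node .rej []]
    else
      .node (.st q) (firstSucc ((List.range' (C q + 1) ((M.d2 q).length - C q)).attach.map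
        (fun x => btr M ((M.d2 q)[x.1 - 1]'(by
            have hx := x.2; rw [List.mem_range'_1] at hx; omega)) w
          (Function.update C q x.1))))
  else
    match w with
    | [] => .node (.st q) [.node .rej []]
    | a :: w' =>
      match M.d1 q a with
      | some q' => .node (.st q) [btr M q' w' (fun _ => 0)]
      | none => .node (.st q) [.node .rej []]
termination_by (w.length, cMeasure M C)
decreasing_by
  · apply Prod.Lex.right
    have hx := x.2; rw [List.mem_range'_1] at hx
    apply Finset.sum_lt_sum
    · intro p _
      by_cases hp : p = q
      · subst hp; simp only [Function.update_self]; omega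
      · simp only [Function.update_of_ne hp]; omega
    · exact ⟨q, Finset.mem_univ q, by simp only [Function.update_self]; omega⟩
  · apply Prod.Lex.left
    simp

/-- The backtracking run of `M` on `w`. -/
def btrW {A Q : Type} [DecidableEq Q] [Fintype Q] (M : PNFA A Q) (w : List A) :
    OTree (BLab Q) :=
  btr M M.init w (fun _ => 0)

/-! ## NFA with ε-transitions -/

/-- An NFA with ε-transitions (`none` plays the role of ε). -/
structure ENFA (A Q : Type) where
  init : Q
  tr : Q → Option A → Set Q
  F : Set Q

namespace ENFA

inductive Steps {A Q : Type} (N : ENFA A Q) : Q → List A → Q → Prop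
  | refl (q : Q) : Steps N q [] q
  | eps {p q r : Q} {w : List A} : q ∈ N.tr p none → Steps N q w r → Steps N p w r
  | sym {p q r : Q} {a : A} {w : List A} :
      q ∈ N.tr p (some a) → Steps N q w r → Steps N p (a :: w) r

/-- The language accepted by the ε-NFA. -/
def Lang {A Q : Type} (N : ENFA A Q) : Set (List A) :=
  {w | ∃ q, q ∈ N.F ∧ N.Steps N.init w q}

end ENFA

/-- The NFA `Ā` corresponding to a pNFA (forget priorities). -/
def PNFA.toENFA {A Q : Type} (M : PNFA A Q) : ENFA A Q where
  init := M.init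
  tr q o :=
    match o with
    | some a => if M.isQ2 q then ∅ else {q' | M.d1 q a = some q'}
    | none => if M.isQ2 q then {q' | q' ∈ M.d2 q} else ∅
  F := {q | M.final q = true}

/-! ## Growth conditions -/

/-- `f` grows exponentially, i.e. `f ∈ 2^{Ω(n)}`. -/
def ExpGrowth (f : ℕ → ℕ) : Prop :=
  ∃ c : ℝ, 1 < c ∧ ∃ N : ℕ, ∀ n ≥ N, c ^ n ≤ (f n : ℝ)

/-- `f(n) = max {|btr_M(w)| : |w| ≤ n}` (the alphabet being finite, the set below is a
nonempty bounded set of naturals, so `sSup` is its maximum). -/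
noncomputable def btrMax {A Q : Type} [Fintype A] [DecidableEq Q] [Fintype Q]
    (M : PNFA A Q) (n : ℕ) : ℕ :=
  sSup {m | ∃ w : List A, w.length ≤ n ∧ m = (btrW M w).size}

/-! ## Regular expressions (with greedy and lazy Kleene star) -/

inductive RE (A : Type) : Type where
  | zero : RE A
  | eps : RE A
  | ch : A → RE A
  | cat : RE A → RE A → RE A
  | alt : RE A → RE A → RE A
  | star : RE A → RE A
  | lazyStar : RE A → RE A

/-- The language denoted by a regular expression (the lazy star has the same
language as the greedy star). -/
def RE.lang {A : Type} : RE A → Language A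
  | .zero => 0
  | .eps => 1
  | .ch a => {[a]}
  | .cat e1 e2 => e1.lang * e2.lang
  | .alt e1 e2 => e1.lang + e2.lang
  | .star e => KStar.kstar e.lang
  | .lazyStar e => KStar.kstar e.lang

/-! ## The prioritized Thompson and Java constructions -/

/-- Raw automaton data over the state space ℕ (used to assemble the constructions;
states are allocated from a counter, so the pieces have disjoint state sets). -/
structure RawA (A : Type) where
  isQ2 : ℕ → Bool
  d1 : ℕ → A → Option ℕ
  d2 : ℕ → List ℕ

namespace RawA

/-- The raw automaton with no states/transitions. -/
def empty {A : Type} : RawA A where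
  isQ2 _ := false
  d1 _ _ := none
  d2 _ := []

/-- Disjoint union of two raw automata. -/
def merge {A : Type} (M1 M2 : RawA A) : RawA A where
  isQ2 q := M1.isQ2 q || M2.isQ2 q
  d1 q a := (M1.d1 q a).orElse (fun _ => M2.d1 q a)
  d2 q := M1.d2 q ++ M2.d2 q

/-- A single `Q₂`-state `q` with prioritized ε-transitions to `l`. -/
def epsNode {A : Type} (q : ℕ) (l : List ℕ) : RawA A where
  isQ2 p := p == q
  d1 _ _ := none
  d2 p := if p = q then l else []

/-- A single `Q₁`-state `q` reading `a` and moving to `f`. -/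
def chNode {A : Type} [DecidableEq A] (q f : ℕ) (a : A) : RawA A where
  isQ2 _ := false
  d1 p x := if p = q ∧ x = a then some f else none
  d2 _ := []

/-- Identify state `a` with state `b` (state `a` is replaced by `b` everywhere). -/
def rename {A : Type} (M : RawA A) (a b : ℕ) : RawA A where
  isQ2 q := if q = b then M.isQ2 a else if q = a then false else M.isQ2 q
  d1 q x := (if q = b then M.d1 a x else if q = a then none else M.d1 q x).map
      (fun r => if r = a then b else r)
  d2 q := (if q = b then M.d2 a else if q = a then [] else M.d2 q).map
      (fun r => if r = a then b else r)

end RawA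

/-- The prioritized Thompson construction.  `thpAux e n` builds, using fresh states
`n, n+1, …`, the quadruple (raw automaton, initial state, final state, next fresh state). -/
def thpAux {A : Type} [DecidableEq A] : RE A → ℕ → RawA A × ℕ × ℕ × ℕ
  | .zero, n => (RawA.empty, n, n + 1, n + 2)
  | .eps, n => (RawA.epsNode n [n + 1], n, n + 1, n + 2)
  | .ch a, n => (RawA.chNode n (n + 1) a, n, n + 1, n + 2)
  | .cat e1 e2, n =>
    let r1 := thpAux e1 n
    let r2 := thpAux e2 r1.2.2.2
    -- identify the final state of the first part with the initial state of the second
    (r1.1.merge (r2.1.rename r2.2.1 r1.2.2.1), r1.2.1, r2.2.2.1, r2.2.2.2)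
  | .alt e1 e2, n =>
    let r1 := thpAux e1 (n + 2)
    let r2 := thpAux e2 r1.2.2.2
    (((r1.1.merge r2.1).merge (RawA.epsNode n [r1.2.1, r2.2.1])).merge
        ((RawA.epsNode r1.2.2.1 [n + 1]).merge (RawA.epsNode r2.2.2.1 [n + 1])),
      n, n + 1, r2.2.2.2)
  | .star e1, n =>
    let r1 := thpAux e1 (n + 2)
    ((r1.1.merge (RawA.epsNode n [r1.2.1, n + 1])).merge
        (RawA.epsNode r1.2.2.1 [r1.2.1, n + 1]), n, n + 1, r1.2.2.2)
  | .lazyStar e1, n =>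
    let r1 := thpAux e1 (n + 2)
    ((r1.1.merge (RawA.epsNode n [n + 1, r1.2.1])).merge
        (RawA.epsNode r1.2.2.1 [n + 1, r1.2.1]), n, n + 1, r1.2.2.2)

/-- The Java construction.  `jpAux e n` builds, using fresh states `n, n+1, …`,
the quadruple (raw automaton, initial state, final state, next fresh state). -/
def jpAux {A : Type} [DecidableEq A] : RE A → ℕ → RawA A × ℕ × ℕ × ℕ
  | .zero, n => (RawA.empty, n, n + 1, n + 2)
  | .eps, n => (RawA.epsNode n [n + 1], n, n + 1, n + 2)
  | .ch a, n => (RawA.chNode n (n + 1) a, n, n + 1, n + 2)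
  | .cat e1 e2, n =>
    let r1 := jpAux e1 (n + 1)
    let r2 := jpAux e2 r1.2.2.2
    -- identify the initial state of the second part with the final state of the first,
    -- add a new initial state `n` with a single ε-transition to the first part
    ((r1.1.merge (r2.1.rename r2.2.1 r1.2.2.1)).merge (RawA.epsNode n [r1.2.1]),
      n, r2.2.2.1, r2.2.2.2)
  | .alt e1 e2, n =>
    let r1 := jpAux e1 (n + 1)
    let r2 := jpAux e2 r1.2.2.2
    -- identify the two final states; new initial state `n` with δ₂(n) = [q1, q2]
    ((r1.1.merge (r2.1.rename r2.2.2.1 r1.2.2.1)).merge (RawA.epsNode n [r1.2.1, r2.2.1]),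
      n, r1.2.2.1, r2.2.2.2)
  | .star e1, n =>
    let r1 := jpAux e1 (n + 1)
    -- new final state `n`; the initial state is the final state of the body,
    -- with δ₂ = [body-initial, new final]
    (r1.1.merge (RawA.epsNode r1.2.2.1 [r1.2.1, n]), r1.2.2.1, n, r1.2.2.2)
  | .lazyStar e1, n =>
    let r1 := jpAux e1 (n + 1)
    (r1.1.merge (RawA.epsNode r1.2.2.1 [n, r1.2.1]), r1.2.2.1, n, r1.2.2.2)

/-- Package a raw automaton as a pNFA on the finite state space `Fin (n+1)`. -/
def RawA.toPNFA {A : Type} (R : RawA A) (n q0 f0 : ℕ) : PNFA A (Fin (n + 1)) where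
  isQ2 q := R.isQ2 q.1
  init := if h : q0 < n + 1 then ⟨q0, h⟩ else ⟨0, Nat.succ_pos n⟩
  d1 q a := (R.d1 q.1 a).bind (fun m => if h : m < n + 1 then some ⟨m, h⟩ else none)
  d2 q := (R.d2 q.1).filterMap (fun m => if h : m < n + 1 then some ⟨m, h⟩ else none)
  final q := q.1 == f0

/-- The pNFA `Thp(E)` of the prioritized Thompson construction. -/
def thp {A : Type} [DecidableEq A] (e : RE A) : PNFA A (Fin ((thpAux e 0).2.2.2 + 1)) :=
  (thpAux e 0).1.toPNFA (thpAux e 0).2.2.2 (thpAux e 0).2.1 (thpAux e 0).2.2.1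

/-- The pNFA `Jp(E)` of the Java construction. -/
def jp {A : Type} [DecidableEq A] (e : RE A) : PNFA A (Fin ((jpAux e 0).2.2.2 + 1)) :=
  (jpAux e 0).1.toPNFA (jpAux e 0).2.2.2 (jpAux e 0).2.1 (jpAux e 0).2.2.1

/-- The two-letter alphabet Σ = {a, b}. -/
inductive AB : Type where
  | a : AB
  | b : AB
deriving DecidableEq

/-!
No state of `Thp((a*)*)` reads `b`, so every run on `aⁿb` fails and the backtracking run is
the whole search tree. After reading an `a` the automaton sits in the final state `5` of `Thp(a)`,
whose two ε-choices (back to `4` directly, or via the inner final state `3` and the inner initial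
state `2` to `4`) both read the next `a` and return to `5` with fresh counters. Hence the run
from `5` at least doubles in size with every `a`.
-/

namespace OTree

variable {α : Type}

lemma size_node (l : α) (ts : List (OTree α)) :
    (node l ts).size = 1 + (ts.map size).sum := by
  rw [size]
  simp

lemma one_le_size (t : OTree α) : 1 ≤ t.size := by
  cases t
  rw [size_node]
  omega

lemma anyLabel_node (p : α → Bool) (l : α) (ts : List (OTree α)) :
    anyLabel p (node l ts) = (p l || ts.any (anyLabel p)) := by
  rw [anyLabel]
  simp [List.any_eq]

lemma succeeds_node_st {Q : Type} (q : Q) (ts : List (OTree (BLab Q))) :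
    (node (.st q) ts).succeeds = ts.any succeeds := by
  simp only [succeeds, anyLabel_node, Bool.false_or]
  rfl

lemma succeeds_node_rej {Q : Type} : (node (.rej : BLab Q) []).succeeds = false := by
  simp [succeeds, anyLabel_node]

end OTree

lemma firstSucc_eq_self {Q : Type} {ts : List (OTree (BLab Q))}
    (h : ∀ t ∈ ts, t.succeeds = false) : firstSucc ts = ts := by
  induction ts with
  | nil => rfl
  | cons t ts ih =>
    simp only [List.mem_cons, forall_eq_or_imp] at h
    rw [firstSucc, h.1, if_neg Bool.false_ne_true, ih h.2]

lemma mem_of_mem_firstSucc {Q : Type} {ts : List (OTree (BLab Q))} {t : OTree (BLab Q)}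
    (ht : t ∈ firstSucc ts) : t ∈ ts := by
  induction ts with
  | nil => simp [firstSucc] at ht
  | cons s ts ih =>
    rw [firstSucc] at ht
    split at ht
    · simp_all
    · simp only [List.mem_cons] at ht ⊢
      exact ht.imp_right ih

section Backtracking

variable {A Q : Type} [DecidableEq Q] [Fintype Q] (M : PNFA A Q)

theorem btr_succeeds_eq_false_of_mem {b : A} (hb : ∀ q, M.d1 q b = none) {w : List A}
    (hbw : b ∈ w) (q : Q) (C : Q → ℕ) : (btr M q w C).succeeds = false := by
  induction q, w, C using btr.induct M with
  | case1 q w C h => simp_all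
  | case2 q w C h1 h2 h3 =>
    rw [btr.eq_def, if_neg h1, if_pos h2, dif_pos h3]
    simp [OTree.succeeds_node_st, OTree.succeeds_node_rej]
  | case3 q w C h1 h2 h3 ih =>
    rw [btr.eq_def, if_neg h1, if_pos h2, dif_neg h3, OTree.succeeds_node_st, List.any_eq_false]
    intro t ht
    obtain ⟨x, -, rfl⟩ := List.mem_map.1 (mem_of_mem_firstSucc ht)
    simpa using ih x hbw
  | case4 => simp at hbw
  | case5 q C h1 a w q' hd h2 ih =>
    have hab : a ≠ b := by rintro rfl; simp [hb] at hd
    rw [btr.eq_def, if_neg h2, if_neg h1]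
    simpa [hd, OTree.succeeds_node_st] using ih (by simpa [Ne.symm hab] using hbw)
  | case6 q C h1 a w hd h2 =>
    rw [btr.eq_def, if_neg h2, if_neg h1]
    simp [hd, OTree.succeeds_node_st, OTree.succeeds_node_rej]

lemma size_btr_of_isQ2 {q : Q} {w : List A} {C : Q → ℕ} (hq : M.isQ2 q = true)
    (hC : C q < (M.d2 q).length) (hfail : ∀ p C, (btr M p w C).succeeds = false) :
    (btr M q w C).size = 1 + ((List.range' (C q + 1) ((M.d2 q).length - C q)).map fun i =>
      (btr M ((M.d2 q).getD (i - 1) q) w (Function.update C q i)).size).sum := by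
  have hrej : ¬(M.final q = true ∧ w.isEmpty = true) := fun hacc => by
    simpa [btr.eq_def, hacc, OTree.succeeds, OTree.anyLabel_node] using hfail q C
  have hchildren : ∀ t ∈ (List.range' (C q + 1) ((M.d2 q).length - C q)).attach.map
      (fun x => btr M ((M.d2 q)[x.1 - 1]'(by grind)) w
        (Function.update C q x.1)), t.succeeds = false := by
    simp only [List.mem_map]
    rintro _ ⟨x, -, rfl⟩
    exact hfail _ _
  rw [btr.eq_def, if_neg hrej, if_pos hq, dif_neg (by omega), firstSucc_eq_self hchildren,
    OTree.size_node, List.map_map]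
  conv_rhs => rw [← List.attach_map_val]
  congr 1
  refine congrArg List.sum (List.map_congr_left fun ⟨i, hi⟩ _ => ?_)
  rw [List.mem_range'_1] at hi
  simp only [Function.comp_apply,
    List.getD_eq_getElem (M.d2 q) q (by omega : i - 1 < (M.d2 q).length)]

lemma size_btr_of_d2_eq_pair {q p₁ p₂ : Q} {w : List A} {C : Q → ℕ} (hq : M.isQ2 q = true)
    (hd : M.d2 q = [p₁, p₂]) (hC : C q = 0) (hfail : ∀ p C, (btr M p w C).succeeds = false) :
    (btr M q w C).size =
      1 + (btr M p₁ w (Function.update C q 1)).size +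
        (btr M p₂ w (Function.update C q 2)).size := by
  rw [size_btr_of_isQ2 M hq (by simp [hd, hC]) hfail]
  simp [hd, hC, List.range'_succ]
  omega

lemma size_btr_cons_of_d1_eq_some {q q' : Q} {a : A} {w : List A} (C : Q → ℕ)
    (hq : M.isQ2 q = false) (hd : M.d1 q a = some q') :
    (btr M q (a :: w) C).size = 1 + (btr M q' w fun _ => 0).size := by
  rw [btr.eq_def, if_neg (by simp), if_neg (by simp [hq])]
  simp [hd, OTree.size_node]

end Backtracking

lemma expGrowth_of_two_pow_le {f : ℕ → ℕ} (h : ∀ n, 2 ^ n ≤ f (n + 1)) : ExpGrowth f := by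
  refine ⟨3 / 2, by norm_num, 3, fun n hn => ?_⟩
  obtain ⟨k, rfl⟩ : ∃ k, n = k + 3 := ⟨n - 3, by omega⟩
  calc ((3 : ℝ) / 2) ^ (k + 3) = 27 / 8 * (3 / 2) ^ k := by ring
    _ ≤ 4 * 2 ^ k := by gcongr <;> norm_num
    _ = ((2 ^ (k + 2) : ℕ) : ℝ) := by push_cast; ring
    _ ≤ f (k + 3) := by exact_mod_cast h (k + 2)

/- States of `Thp((a*)*)`: `0`, `1` are the initial and final state of the outer star, `2`, `3`
those of the inner star, and `4 -a→ 5` is `Thp(a)`; state `6` is unused. -/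
def thpAStarStar : PNFA AB (Fin 7) := thp (.star (.star (.ch .a)))

namespace thpAStarStar

local notation "𝒜" => thpAStarStar

lemma d1_b (q : Fin 7) : PNFA.d1 𝒜 q .b = none := by
  revert q; decide

lemma d2_zero : PNFA.d2 𝒜 0 = [2, 1] := rfl

lemma d2_two : PNFA.d2 𝒜 2 = [4, 3] := rfl

lemma d2_three : PNFA.d2 𝒜 3 = [2, 1] := rfl

lemma d2_five : PNFA.d2 𝒜 5 = [4, 3] := rfl

lemma size_btr_four_cons (w : List AB) (C : Fin 7 → ℕ) :
    (btr 𝒜 4 (.a :: w) C).size = 1 + (btr 𝒜 5 w fun _ => 0).size :=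
  size_btr_cons_of_d1_eq_some 𝒜 C rfl rfl

variable {w : List AB}

lemma btr_cons_succeeds_eq_false (hb : AB.b ∈ w) (q : Fin 7) (C : Fin 7 → ℕ) :
    (btr 𝒜 q (.a :: w) C).succeeds = false :=
  btr_succeeds_eq_false_of_mem 𝒜 d1_b (List.mem_cons_of_mem _ hb) q C

lemma size_btr_five_lt_size_btr_two_cons (hb : AB.b ∈ w) {C : Fin 7 → ℕ} (hC : C 2 = 0) :
    (btr 𝒜 5 w fun _ => 0).size < (btr 𝒜 2 (.a :: w) C).size := by
  rw [size_btr_of_d2_eq_pair 𝒜 rfl d2_two hC (btr_cons_succeeds_eq_false hb),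
    size_btr_four_cons]
  omega

lemma two_mul_size_btr_five_le (hb : AB.b ∈ w) :
    2 * (btr 𝒜 5 w fun _ => 0).size ≤ (btr 𝒜 5 (.a :: w) fun _ => 0).size := by
  have hfail := btr_cons_succeeds_eq_false hb
  rw [size_btr_of_d2_eq_pair 𝒜 rfl d2_five rfl hfail, size_btr_four_cons,
    size_btr_of_d2_eq_pair 𝒜 rfl d2_three (by simp) hfail]
  have := size_btr_five_lt_size_btr_two_cons hb
    (C := Function.update (Function.update (fun _ => 0) 5 2) 3 1) (by simp)
  omega

lemma size_btr_five_lt_size_btrW (hb : AB.b ∈ w) :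
    (btr 𝒜 5 w fun _ => 0).size < (btrW 𝒜 (.a :: w)).size := by
  rw [btrW, show PNFA.init 𝒜 = 0 from rfl,
    size_btr_of_d2_eq_pair 𝒜 rfl d2_zero rfl (btr_cons_succeeds_eq_false hb)]
  have := size_btr_five_lt_size_btr_two_cons hb
    (C := Function.update (fun _ => 0) 0 1) (by simp)
  omega

lemma two_pow_le_size_btr_five (n : ℕ) :
    2 ^ n ≤ (btr 𝒜 5 (List.replicate n .a ++ [.b]) fun _ => 0).size := by
  induction n with
  | zero => exact OTree.one_le_size _
  | succ n ih =>
    rw [pow_succ', List.replicate_succ, List.cons_append]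
    exact (Nat.mul_le_mul_left 2 ih).trans (two_mul_size_btr_five_le (by simp))

end thpAStarStar

/-- For `E = (a*)*`, the pNFA `Thp(E)` has exponential backtracking,
witnessed by the family `W = {aⁿb : n ∈ ℕ}`: the function
`n ↦ |btr_{Thp(E)}(aⁿb)|` is in `2^{Ω(n)}`. -/
theorem statement6 :
    ExpGrowth (fun n =>
      (btrW (thp (RE.star (RE.star (RE.ch AB.a))))
        (List.replicate n AB.a ++ [AB.b])).size) := by
  refine expGrowth_of_two_pow_le fun n => ?_
  rw [List.replicate_succ, List.cons_append]
  exact (thpAStarStar.two_pow_le_size_btr_five n).trans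
    (thpAStarStar.size_btr_five_lt_size_btrW (by simp)).le
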